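/- arXiv:2310.01391 — 4 statements merged into one kernel-verified Lean document; each statement's English description precedes it below -/
import Mathlib

section
/- Let p_x be a probability density on R^n, H ∈ R^{p×n}, σ > 0, and define the observation density p_s(s) = ∫ G_σ(s − Hx) p_x(x) dx, where G_σ is the Gaussian density with standard deviation σ. Let R(s) = E[x | s = Hx + n] be the MMSE estimator of x from s under Gaussian noise n ~ N(0, σ²I). Then for all s ∈ R^p, H R(s) − s = σ² ∇ log p_s(s). -/
open MeasureTheory RealInnerProductSpace Real

noncomputable section

/-- Generalized Tweedie formula: for the MMSE estimator `R` of `x` from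
`s = Hx + n`, `n ~ N(0, σ²I)`, we have `H R(s) − s = σ² ∇ log p_s(s)`. -/
theorem generalized_tweedie
    {n p : ℕ} (σ : ℝ) (hσ : 0 < σ)
    (H : EuclideanSpace ℝ (Fin n) →L[ℝ] EuclideanSpace ℝ (Fin p))
    (px : EuclideanSpace ℝ (Fin n) → ℝ)
    (hpx_pos : ∀ x, 0 < px x)
    (hpx_int : ∫ x, px x = 1)
    (Gσ : EuclideanSpace ℝ (Fin p) → ℝ)
    (hG : ∀ u, Gσ u = (2 * π * σ ^ 2) ^ (-(p : ℝ) / 2) * Real.exp (-‖u‖ ^ 2 / (2 * σ ^ 2)))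
    (ps : EuclideanSpace ℝ (Fin p) → ℝ)
    (hps : ∀ s, ps s = ∫ x, Gσ (s - H x) * px x)
    (hps_pos : ∀ s, 0 < ps s)
    (R : EuclideanSpace ℝ (Fin p) → EuclideanSpace ℝ (Fin n))
    (hR : ∀ s, R s = (ps s)⁻¹ • ∫ x, (Gσ (s - H x) * px x) • x)
    (hint : ∀ s, Integrable (fun x => (Gσ (s - H x) * px x) • x))
    (hint' : ∀ s, Integrable (fun x => Gσ (s - H x) * px x))
    -- differentiation under the integral sign is valid:
    (hgrad : ∀ s, HasGradientAt ps
      (∫ x, px x • gradient (fun t => Gσ (t - H x)) s) s) :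
    ∀ s, H (R s) - s = σ ^ 2 • gradient (fun t => Real.log (ps t)) s := by
  have hσ2 : (σ : ℝ) ^ 2 ≠ 0 := pow_ne_zero 2 hσ.ne'
  set c0 : ℝ := (2 * π * σ ^ 2) ^ (-(p : ℝ) / 2) with hc0
  -- gradient of the shifted Gaussian
  have key : ∀ (a s : EuclideanSpace ℝ (Fin p)),
      HasGradientAt (fun t => Gσ (t - a)) ((-(σ ^ 2)⁻¹ * Gσ (s - a)) • (s - a)) s := by
    intro a s
    rw [hasGradientAt_iff_hasFDerivAt]
    have h1 : HasFDerivAt (fun t : EuclideanSpace ℝ (Fin p) => t - a)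
        (ContinuousLinearMap.id ℝ _) s := (hasFDerivAt_id s).sub_const a
    have h2 := h1.norm_sq
    have h3 := (h2.const_mul (-(2 * σ ^ 2)⁻¹)).exp.const_mul c0
    have hfun : (fun t : EuclideanSpace ℝ (Fin p) => Gσ (t - a))
        = fun t => c0 * Real.exp (-(2 * σ ^ 2)⁻¹ * ‖t - a‖ ^ 2) := by
      funext t; rw [hG]; congr 1; ring
    rw [← hfun] at h3
    refine h3.congr_fderiv ?_
    ext y
    simp only [InnerProductSpace.toDual_apply_apply, ContinuousLinearMap.smul_apply,
      ContinuousLinearMap.comp_apply, ContinuousLinearMap.id_apply, innerSL_apply_apply,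
      real_inner_smul_left, smul_eq_mul, hG]
    field_simp
    ring
  intro s
  set g : EuclideanSpace ℝ (Fin n) → ℝ := fun x => Gσ (s - H x) * px x with hg
  set G : EuclideanSpace ℝ (Fin p) :=
    ∫ x, px x • gradient (fun t => Gσ (t - H x)) s with hGdef
  -- gradient of log ps
  have hlog : HasGradientAt (fun t => Real.log (ps t)) ((ps s)⁻¹ • G) s := by
    rw [hasGradientAt_iff_hasFDerivAt]
    have h := (Real.hasDerivAt_log (hps_pos s).ne').comp_hasFDerivAt s (hgrad s).hasFDerivAt
    refine h.congr_fderiv ?_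
    ext y
    simp [InnerProductSpace.toDual_apply_apply, real_inner_smul_left]
    exact Or.inl rfl
  rw [HasGradientAt.gradient hlog]
  -- compute σ² • G
  have hG2 : σ ^ 2 • G = ∫ x, g x • (H x - s) := by
    rw [hGdef, ← integral_smul]
    congr 1
    funext x
    rw [HasGradientAt.gradient (key (H x) s)]
    rw [smul_smul, smul_smul]
    have : H x - s = -(s - H x) := by abel
    rw [this, smul_neg, ← neg_smul]
    congr 1
    field_simp
    ring
  rw [smul_comm, hG2]
  -- compute the integral
  have hi1 : Integrable (fun x => g x • H x) := by
    have h := (ContinuousLinearMap.integrable_comp H (hint s))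
    simp only [_root_.map_smul] at h
    exact h
  have hi2 : Integrable (fun x => g x • s) := (hint' s).smul_const s
  have hsplit : (∫ x, g x • (H x - s)) = (∫ x, g x • H x) - (∫ x, g x • s) := by
    rw [← integral_sub hi1 hi2]
    congr 1; funext x; rw [smul_sub]
  have hHx : (∫ x, g x • H x) = H (∫ x, g x • x) := by
    rw [← ContinuousLinearMap.integral_comp_comm H (hint s)]
    congr 1; funext x; rw [_root_.map_smul]
  have hsx : (∫ x, g x • s) = ps s • s := by
    rw [integral_smul_const, ← hps]
  rw [hsplit, hHx, hsx, smul_sub, hR, _root_.map_smul, smul_smul,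
    inv_mul_cancel₀ (hps_pos s).ne', one_smul]
end
end

section
/- Let R be the MMSE restoration operator for the problem s = Hx + n with Gaussian noise, G(x) = x − R(Hx), and h(x) = −τσ² log p_s(Hx). If x* is a fixed point of the DRP iteration x ← sprox_{γg}(x − γτ G(x)) with g subdifferentiable, then 0 ∈ ∂g(x*) + ∇h(x*), i.e., x* is a stationary point of f = g + h. -/
open MeasureTheory RealInnerProductSpace Real

noncomputable section

/-- The convex subdifferential of `g : E → ℝ` at `x`. -/
def subdiff {E : Type*} [NormedAddCommGroup E] [InnerProductSpace ℝ E]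
    (g : E → ℝ) (x : E) : Set E :=
  {u | ∀ y, g x + ⟪u, y - x⟫ ≤ g y}

/-- Theorem 1 (fixed points of DRP): if `x*` is a fixed point of the DRP
iteration with MMSE restoration operator `R`, `G(x) = x − R(Hx)` and
`h(x) = −τσ² log p_s(Hx)`, then `0 ∈ ∂g(x*) + ∇h(x*)`. -/
theorem drp_fixed_point_stationary
    {n p : ℕ} (σ τ γ : ℝ) (hσ : 0 < σ) (hτ : 0 < τ) (hγ : 0 < γ)
    (H : EuclideanSpace ℝ (Fin n) →L[ℝ] EuclideanSpace ℝ (Fin p))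
    (px : EuclideanSpace ℝ (Fin n) → ℝ)
    (hpx_pos : ∀ x, 0 < px x)
    (Gσ : EuclideanSpace ℝ (Fin p) → ℝ)
    (hGσ : ∀ u, Gσ u = (2 * π * σ ^ 2) ^ (-(p : ℝ) / 2) * Real.exp (-‖u‖ ^ 2 / (2 * σ ^ 2)))
    (ps : EuclideanSpace ℝ (Fin p) → ℝ)
    (hps : ∀ s, ps s = ∫ x, Gσ (s - H x) * px x)
    (hps_pos : ∀ s, 0 < ps s)
    -- R is the MMSE restoration operator:
    (R : EuclideanSpace ℝ (Fin p) → EuclideanSpace ℝ (Fin n))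
    (hR : ∀ s, R s = (ps s)⁻¹ • ∫ x, (Gσ (s - H x) * px x) • x)
    (G : EuclideanSpace ℝ (Fin n) → EuclideanSpace ℝ (Fin n))
    (hG : ∀ x, G x = x - R (H x))
    (h : EuclideanSpace ℝ (Fin n) → ℝ)
    (hh : ∀ x, h x = -(τ * σ ^ 2) * Real.log (ps (H x)))
    (h' : EuclideanSpace ℝ (Fin n) → EuclideanSpace ℝ (Fin n))
    (hgrad : ∀ x, HasGradientAt h (h' x) x)
    -- generalized Tweedie identity τ HᵀH G = ∇h:
    (hTweedie : ∀ x, τ • (ContinuousLinearMap.adjoint H) (H (G x)) = h' x)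
    (g : EuclideanSpace ℝ (Fin n) → ℝ)
    (xstar : EuclideanSpace ℝ (Fin n))
    -- x* is a fixed point of DRP: first-order optimality of the scaled
    -- proximal subproblem at z = x* − γτ G(x*):
    (hfix : ∃ u ∈ subdiff g xstar,
      (ContinuousLinearMap.adjoint H) (H (xstar - (xstar - (γ * τ) • G xstar))) + γ • u = 0) :
    ∃ u ∈ subdiff g xstar, u + h' xstar = 0 := by
  obtain ⟨u, hu, heq⟩ := hfix
  refine ⟨u, hu, ?_⟩
  have h1 : xstar - (xstar - (γ * τ) • G xstar) = (γ * τ) • G xstar := by abel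
  rw [h1] at heq
  have h2 : γ • (h' xstar + u) = 0 := by
    rw [← hTweedie xstar]
    have : ((ContinuousLinearMap.adjoint H) (H ((γ * τ) • G xstar))) =
        γ • (τ • (ContinuousLinearMap.adjoint H) (H (G xstar))) := by
      rw [H.map_smul, (ContinuousLinearMap.adjoint H).map_smul, smul_smul]
    rw [smul_add, ← this]
    exact heq
  have h3 := smul_eq_zero.mp h2
  rcases h3 with h3 | h3
  · exact absurd h3 (ne_of_gt hγ)
  · rw [add_comm] at h3; exact h3
end
end

section
/- Let h: R^n → R be differentiable with L-Lipschitz gradient, g: R^n → R ∪ {+∞} subdifferentiable, H ∈ R^{p×n} with HᵀH ⪰ μI for some μ > 0, and γ = μ/(αL) with α > 1. If x^k minimizes φ(x) = (1/(2γ))(x − x^{k−1})ᵀHᵀH(x − x^{k−1}) + ∇h(x^{k−1})ᵀ(x − x^{k−1}) + g(x), then f(x^k) ≤ f(x^{k−1}) − (α−1)(L/2)‖x^k − x^{k−1}‖², where f = g + h. -/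
open RealInnerProductSpace Real

noncomputable section

private lemma descent_lemma {n : ℕ} (L : ℝ) (hL : 0 ≤ L)
    (h : EuclideanSpace ℝ (Fin n) → ℝ) (h' : EuclideanSpace ℝ (Fin n) → EuclideanSpace ℝ (Fin n))
    (hgrad : ∀ x, HasGradientAt h (h' x) x)
    (hlip : ∀ x y, ‖h' x - h' y‖ ≤ L * ‖x - y‖)
    (x y : EuclideanSpace ℝ (Fin n)) :
    h y ≤ h x + ⟪h' x, y - x⟫ + L / 2 * ‖y - x‖ ^ 2 := by
  set d := y - x with hd
  set φ : ℝ → ℝ := fun t => h (x + t • d) - t * ⟪h' x, d⟫ - L * t ^ 2 / 2 * ‖d‖ ^ 2 with hφ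
  have hderiv : ∀ t : ℝ, HasDerivAt φ
      (⟪h' (x + t • d), d⟫ - ⟪h' x, d⟫ - L * t * ‖d‖ ^ 2) t := by
    intro t
    have hc : HasDerivAt (fun t : ℝ => x + t • d) d t := by
      simpa using ((hasDerivAt_id t).smul_const d).const_add x
    have hf : HasFDerivAt h (InnerProductSpace.toDual ℝ _ (h' (x + t • d))) (x + t • d) :=
      (hgrad (x + t • d)).hasFDerivAt
    have h1 : HasDerivAt (fun t : ℝ => h (x + t • d)) ⟪h' (x + t • d), d⟫ t := by
      have h1' := hf.comp_hasDerivAt t hc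
      simp only [InnerProductSpace.toDual_apply_apply] at h1'
      exact h1'
    have h2 : HasDerivAt (fun t : ℝ => t * ⟪h' x, d⟫) ⟪h' x, d⟫ t := by
      simpa using (hasDerivAt_id t).mul_const (⟪h' x, d⟫ : ℝ)
    have h3 : HasDerivAt (fun t : ℝ => L * t ^ 2 / 2 * ‖d‖ ^ 2) (L * t * ‖d‖ ^ 2) t := by
      have : HasDerivAt (fun t : ℝ => t ^ 2) (2 * t) t := by
        simpa using hasDerivAt_pow 2 t
      have := ((this.const_mul L).div_const 2).mul_const (‖d‖ ^ 2)
      rw [show L * t * ‖d‖ ^ 2 = L * (2 * t) / 2 * ‖d‖ ^ 2 by ring]; exact this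
    exact (h1.sub h2).sub h3
  have hanti : AntitoneOn φ (Set.Icc 0 1) := by
    apply antitoneOn_of_deriv_nonpos (convex_Icc 0 1)
    · exact (continuous_iff_continuousAt.2
        fun t => (hderiv t).differentiableAt.continuousAt).continuousOn
    · intro t _
      exact (hderiv t).differentiableAt.differentiableWithinAt
    · intro t ht
      rw [interior_Icc] at ht
      rw [(hderiv t).deriv]
      have key : ⟪h' (x + t • d) - h' x, d⟫ ≤ L * t * ‖d‖ ^ 2 := by
        calc ⟪h' (x + t • d) - h' x, d⟫ ≤ ‖h' (x + t • d) - h' x‖ * ‖d‖ :=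
              real_inner_le_norm _ _
          _ ≤ (L * ‖(x + t • d) - x‖) * ‖d‖ := by
              apply mul_le_mul_of_nonneg_right (hlip _ _) (norm_nonneg _)
          _ = L * t * ‖d‖ ^ 2 := by
              rw [add_sub_cancel_left, norm_smul]
              simp [abs_of_nonneg ht.1.le]; ring
      have := inner_sub_left (𝕜 := ℝ) (h' (x + t • d)) (h' x) d
      linarith [key, this.symm.le, this.le]
  have h01 := hanti (Set.mem_Icc.2 ⟨le_refl 0, zero_le_one⟩)
    (Set.mem_Icc.2 ⟨zero_le_one, le_refl 1⟩) zero_le_one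
  simp only [hφ, one_smul, zero_smul, add_zero] at h01
  have : x + d = y := by rw [hd]; abel
  rw [this] at h01
  nlinarith [h01]

/-- Per-iteration sufficient descent of DRP: if `x^k` minimizes the scaled
proximal surrogate `φ`, then `f(x^k) ≤ f(x^{k−1}) − (α−1)(L/2)‖x^k − x^{k−1}‖²`
for `f = g + h`. -/
theorem drp_sufficient_descent
    {n p : ℕ} (L μ α γ : ℝ) (hL : 0 < L) (hμ : 0 < μ) (hα : 1 < α)
    (hγ : γ = μ / (α * L))
    (H : EuclideanSpace ℝ (Fin n) →L[ℝ] EuclideanSpace ℝ (Fin p))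
    -- HᵀH ⪰ μI:
    (hμH : ∀ v : EuclideanSpace ℝ (Fin n), μ * ‖v‖ ^ 2 ≤ ‖H v‖ ^ 2)
    (h g : EuclideanSpace ℝ (Fin n) → ℝ)
    (h' : EuclideanSpace ℝ (Fin n) → EuclideanSpace ℝ (Fin n))
    (hgrad : ∀ x, HasGradientAt h (h' x) x)
    -- ∇h is L-Lipschitz:
    (hlip : ∀ x y, ‖h' x - h' y‖ ≤ L * ‖x - y‖)
    (xprev xk : EuclideanSpace ℝ (Fin n))
    -- x^k minimizes φ:
    (hmin : ∀ y,
      (1 / (2 * γ)) * ‖H (xk - xprev)‖ ^ 2 + ⟪h' xprev, xk - xprev⟫ + g xk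
        ≤ (1 / (2 * γ)) * ‖H (y - xprev)‖ ^ 2 + ⟪h' xprev, y - xprev⟫ + g y) :
    g xk + h xk ≤ g xprev + h xprev - (α - 1) * (L / 2) * ‖xk - xprev‖ ^ 2 := by
  have hγpos : 0 < γ := by
    rw [hγ]; positivity
  have hg : (1 / (2 * γ)) * ‖H (xk - xprev)‖ ^ 2 + ⟪h' xprev, xk - xprev⟫ + g xk ≤ g xprev := by
    have := hmin xprev
    simpa using this
  have hdesc := descent_lemma L hL.le h h' hgrad hlip xprev xk
  have hHd : μ * ‖xk - xprev‖ ^ 2 ≤ ‖H (xk - xprev)‖ ^ 2 := hμH _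
  have hcoef : (1 / (2 * γ)) * (μ * ‖xk - xprev‖ ^ 2) ≤ (1 / (2 * γ)) * ‖H (xk - xprev)‖ ^ 2 :=
    mul_le_mul_of_nonneg_left hHd (by positivity)
  have hγ' : (1 / (2 * γ)) * μ = α * L / 2 := by
    rw [hγ]; field_simp
  nlinarith [hcoef, hg, hdesc, sq_nonneg ‖xk - xprev‖]

end
end

section
/- Let h be differentiable with L-Lipschitz gradient, H ∈ R^{p×n} with μI ⪯ HᵀH ⪯ λI, μ > 0, and γ = μ/(αL), α > 1. Suppose x^k satisfies (1/γ)HᵀH(x^{k−1} − x^k) ∈ ∂g(x^k) + ∇h(x^{k−1}). Then the vector w(x^k) := (1/γ)HᵀH(x^{k−1} − x^k) + ∇h(x^k) − ∇h(x^{k−1}) belongs to ∂g(x^k) + ∇h(x^k) and satisfies ‖w(x^k)‖ ≤ L(α(λ/μ) + 1)‖x^k − x^{k−1}‖. -/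
open RealInnerProductSpace Real

noncomputable section

/-- Subgradient bound for DRP: the vector
`w(x^k) = (1/γ)HᵀH(x^{k−1} − x^k) + ∇h(x^k) − ∇h(x^{k−1})` belongs to
`∂g(x^k) + ∇h(x^k)` and satisfies `‖w(x^k)‖ ≤ L(α(λ/μ)+1)‖x^k − x^{k−1}‖`. -/
theorem drp_subgradient_bound
    {n p : ℕ} (L μ lam α γ : ℝ) (hL : 0 < L) (hμ : 0 < μ) (hα : 1 < α)
    (hγ : γ = μ / (α * L))
    (H : EuclideanSpace ℝ (Fin n) →L[ℝ] EuclideanSpace ℝ (Fin p))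
    -- μI ⪯ HᵀH ⪯ λI:
    (hμH : ∀ v : EuclideanSpace ℝ (Fin n), μ * ‖v‖ ^ 2 ≤ ‖H v‖ ^ 2)
    (hlamH : ∀ v : EuclideanSpace ℝ (Fin n), ‖H v‖ ^ 2 ≤ lam * ‖v‖ ^ 2)
    (h g : EuclideanSpace ℝ (Fin n) → ℝ)
    (h' : EuclideanSpace ℝ (Fin n) → EuclideanSpace ℝ (Fin n))
    (hgrad : ∀ x, HasGradientAt h (h' x) x)
    (hlip : ∀ x y, ‖h' x - h' y‖ ≤ L * ‖x - y‖)
    (xprev xk : EuclideanSpace ℝ (Fin n))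
    -- optimality of the k-th subproblem:
    (hopt : ∃ u ∈ subdiff g xk,
      (1 / γ) • (ContinuousLinearMap.adjoint H) (H (xprev - xk)) = u + h' xprev) :
    (∃ u ∈ subdiff g xk,
        (1 / γ) • (ContinuousLinearMap.adjoint H) (H (xprev - xk)) + h' xk - h' xprev
          = u + h' xk) ∧
      ‖(1 / γ) • (ContinuousLinearMap.adjoint H) (H (xprev - xk)) + h' xk - h' xprev‖
        ≤ L * (α * (lam / μ) + 1) * ‖xk - xprev‖ := by
  obtain ⟨u, hu, heq⟩ := hopt
  refine ⟨⟨u, hu, by rw [heq]; abel⟩, ?_⟩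
  by_cases hv : xprev - xk = 0
  · obtain rfl : xprev = xk := sub_eq_zero.mp hv
    simp
  · have hvpos : 0 < ‖xprev - xk‖ := norm_pos_iff.mpr hv
    have hlam0 : 0 < lam := by
      have h1 := hμH (xprev - xk)
      have h2 := hlamH (xprev - xk)
      nlinarith [pow_pos hvpos 2]
    have hHle : ∀ x : EuclideanSpace ℝ (Fin n), ‖H x‖ ≤ Real.sqrt lam * ‖x‖ := by
      intro x
      calc ‖H x‖ = Real.sqrt (‖H x‖ ^ 2) := (Real.sqrt_sq (norm_nonneg _)).symm
        _ ≤ Real.sqrt (lam * ‖x‖ ^ 2) := Real.sqrt_le_sqrt (hlamH x)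
        _ = Real.sqrt lam * ‖x‖ := by
            rw [Real.sqrt_mul hlam0.le, Real.sqrt_sq (norm_nonneg _)]
    set v : EuclideanSpace ℝ (Fin n) := xprev - xk with hvdef
    set w : EuclideanSpace ℝ (Fin n) := (ContinuousLinearMap.adjoint H) (H v) with hwdef
    have h1 : ‖w‖ ^ 2 ≤ lam * ‖v‖ * ‖w‖ := by
      have e1 : ‖w‖ ^ 2 = ⟪w, w⟫ := (real_inner_self_eq_norm_sq w).symm
      have e2 : ⟪w, w⟫ = ⟪H v, H w⟫ := by
        rw [hwdef, ContinuousLinearMap.adjoint_inner_left]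
      have e3 : ⟪H v, H w⟫ ≤ ‖H v‖ * ‖H w‖ := real_inner_le_norm _ _
      have e4 : ‖H v‖ * ‖H w‖ ≤ (Real.sqrt lam * ‖v‖) * (Real.sqrt lam * ‖w‖) :=
        mul_le_mul (hHle v) (hHle w) (norm_nonneg _) (by positivity)
      have hs : Real.sqrt lam * Real.sqrt lam = lam := Real.mul_self_sqrt hlam0.le
      nlinarith
    have hwle : ‖w‖ ≤ lam * ‖v‖ := by
      rcases eq_or_lt_of_le (norm_nonneg w) with hw0 | hw0
      · rw [← hw0]; positivity
      · nlinarith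
    have hγpos : 0 < γ := by rw [hγ]; positivity
    have hnormsmul : ‖(1 / γ) • w‖ = (1 / γ) * ‖w‖ := by
      rw [norm_smul, Real.norm_eq_abs, abs_of_pos (by positivity)]
    have hsplit : ‖(1 / γ) • w + h' xk - h' xprev‖ ≤ (1 / γ) * ‖w‖ + ‖h' xk - h' xprev‖ := by
      calc ‖(1 / γ) • w + h' xk - h' xprev‖ = ‖(1 / γ) • w + (h' xk - h' xprev)‖ := by
            rw [add_sub_assoc]
        _ ≤ ‖(1 / γ) • w‖ + ‖h' xk - h' xprev‖ := norm_add_le _ _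
        _ = (1 / γ) * ‖w‖ + ‖h' xk - h' xprev‖ := by rw [hnormsmul]
    have hlipk : ‖h' xk - h' xprev‖ ≤ L * ‖xk - xprev‖ := hlip xk xprev
    have hnv : ‖v‖ = ‖xk - xprev‖ := norm_sub_rev _ _
    have hγinv : 1 / γ = α * L / μ := by
      rw [hγ]; field_simp
    calc ‖(1 / γ) • w + h' xk - h' xprev‖ ≤ (1 / γ) * ‖w‖ + ‖h' xk - h' xprev‖ := hsplit
      _ ≤ (1 / γ) * (lam * ‖v‖) + L * ‖xk - xprev‖ := by
          have := mul_le_mul_of_nonneg_left hwle (le_of_lt (by positivity : (0:ℝ) < 1 / γ))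
          linarith
      _ = (α * L / μ) * (lam * ‖xk - xprev‖) + L * ‖xk - xprev‖ := by rw [hγinv, hnv]
      _ = L * (α * (lam / μ) + 1) * ‖xk - xprev‖ := by field_simp
end
end
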